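/- arXiv:0808.1629 — 2 statements merged into one kernel-verified Lean document; each statement's English description precedes it below -/
import Mathlib

section
/- With the combinatorial setup below, if p = 3, then κ(π) < 4/3 for every permutation π of J. -/
namespace PaperPurity

variable {r : ℕ}

/-- `J₊ = {(i,j) : j ≤ c < i}` (translated to 0-based indexing on `Fin r`). -/
def Jp (c : ℕ) : Set (Fin r × Fin r) := {q | q.2.val < c ∧ c ≤ q.1.val}

/-- `J₀ = {(i,j) : i,j ≤ c or i,j > c}` (0-based). -/
def Jz (c : ℕ) : Set (Fin r × Fin r) :=
  {q | (q.1.val < c ∧ q.2.val < c) ∨ (c ≤ q.1.val ∧ c ≤ q.2.val)}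

/-- `J₋ = {(i,j) : i ≤ c < j}` (0-based). -/
def Jm (c : ℕ) : Set (Fin r × Fin r) := {q | q.1.val < c ∧ c ≤ q.2.val}

/-- Apply `π^s` to both entries of a pair. -/
def iter (π : Equiv.Perm (Fin r)) (s : ℕ) (q : Fin r × Fin r) : Fin r × Fin r :=
  ((π ^ s) q.1, (π ^ s) q.2)

/-- The π-order `ν(i,j)`: the smallest positive `ν` with `(π^ν i, π^ν j) ∈ J₊ ∪ J₋`.
On `J₀,₀` this `sInf` also computes the extended π-order `ν(i,j) - s`. -/
noncomputable def nu (π : Equiv.Perm (Fin r)) (c : ℕ) (q : Fin r × Fin r) : ℕ :=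
  sInf {ν : ℕ | 0 < ν ∧ iter π ν q ∈ Jp c ∪ Jm c}

/-- `J₋,₁`. -/
def Jm1 (π : Equiv.Perm (Fin r)) (c : ℕ) : Set (Fin r × Fin r) :=
  {q | q ∈ Jm c ∧ iter π (nu π c q) q ∈ Jp c}

/-- `J₊,₁`. -/
def Jp1 (π : Equiv.Perm (Fin r)) (c : ℕ) : Set (Fin r × Fin r) :=
  {q' | ∃ q ∈ Jm1 π c, q' = iter π (nu π c q) q}

/-- `J₊,₂ = J₊ \ J₊,₁`. -/
def Jp2 (π : Equiv.Perm (Fin r)) (c : ℕ) : Set (Fin r × Fin r) := Jp c \ Jp1 π c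

/-- `J₀,₀`. -/
def Jz0 (π : Equiv.Perm (Fin r)) (c : ℕ) : Set (Fin r × Fin r) :=
  {q' | ∃ q ∈ Jm1 π c, ∃ s : ℕ, 1 ≤ s ∧ s ≤ nu π c q - 1 ∧ q' = iter π s q}

/-- The π-level `η`. -/
noncomputable def eta (π : Equiv.Perm (Fin r)) (c : ℕ) (q' : Fin r × Fin r) : ℕ :=
  sInf {s : ℕ | ∃ q ∈ Jm1 π c, s ≤ nu π c q ∧ q' = iter π s q}

/-- Membership in `Γ` for the tuple `(γ 1, …, γ s)`. -/
def inGamma (π : Equiv.Perm (Fin r)) (c s : ℕ) (γ : ℕ → Fin r) : Prop :=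
  2 ≤ s ∧ (∀ ℓ : ℕ, 1 ≤ ℓ → ℓ ≤ s - 2 → (γ ℓ, γ (ℓ + 1)) ∈ Jz0 π c) ∧
    (γ (s - 1), γ s) ∈ Jp2 π c

/-- Membership in `Δ` for the tuple `(γ 1, …, γ s)`. -/
def inDelta (π : Equiv.Perm (Fin r)) (c s : ℕ) (γ : ℕ → Fin r) : Prop :=
  3 ≤ s ∧ inGamma π c (s - 1) γ ∧ (γ (s - 1), γ s) ∈ Jz0 π c

/-- `n_t(γ)`. -/
noncomputable def nCount (π : Equiv.Perm (Fin r)) (c s : ℕ) (γ : ℕ → Fin r) (t : ℕ) : ℕ :=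
  Set.ncard {ℓ : ℕ | 1 ≤ ℓ ∧ ℓ ≤ s - 1 ∧ (γ ℓ, γ (ℓ + 1)) ∈ Jz0 π c ∧
    nu π c (γ ℓ, γ (ℓ + 1)) = t}

/-- `κ(γ) = Σ_{t ≥ 1} n_t(γ) p^{-t} ∈ ℚ`. -/
noncomputable def kappa (p : ℕ) (π : Equiv.Perm (Fin r)) (c s : ℕ) (γ : ℕ → Fin r) : ℚ :=
  ∑ᶠ t : ℕ, if 1 ≤ t then (nCount π c s γ t : ℚ) / (p : ℚ) ^ t else 0

/-- Membership in `Γ₁`. -/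
def inGamma1 (π : Equiv.Perm (Fin r)) (c s : ℕ) (γ : ℕ → Fin r) : Prop :=
  inGamma π c s γ ∧ (γ 1, γ s) ∈ Jp1 π c ∧ (γ 2, γ s) ∉ Jp1 π c

/-- Membership in `Δ₁`. -/
def inDelta1 (π : Equiv.Perm (Fin r)) (c s : ℕ) (γ : ℕ → Fin r) : Prop :=
  inDelta π c s γ ∧ (γ 1, γ s) ∈ Jp1 π c ∧ (γ 2, γ s) ∉ Jp1 π c

/-- `κ(π) = max {κ(γ) : γ ∈ Γ₁ ∪ Δ₁}` (and `0` if `Γ₁ ∪ Δ₁ = ∅`); realized as a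
supremum in `ℝ` of the (finite) set of values together with `0`. -/
noncomputable def kappaPerm (p : ℕ) (π : Equiv.Perm (Fin r)) (c : ℕ) : ℝ :=
  sSup (insert (0 : ℝ) {x : ℝ | ∃ (s : ℕ) (γ : ℕ → Fin r),
    (inGamma1 π c s γ ∨ inDelta1 π c s γ) ∧ x = ((kappa p π c s γ : ℚ) : ℝ)})

/-- The `k`-span of the matrix units `E_{i,j}`, `(i,j) ∈ S`. -/
def spanUnits (k : Type*) [Field k] {r : ℕ} (S : Set (Fin r × Fin r)) :
    Submodule k (Matrix (Fin r) (Fin r) k) :=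
  Submodule.span k ((fun q : Fin r × Fin r => Matrix.single q.1 q.2 (1 : k)) '' S)



section Aux
variable (π : Equiv.Perm (Fin r)) (c : ℕ)

variable (π : Equiv.Perm (Fin r)) (c : ℕ)

lemma iter_zero (q : Fin r × Fin r) : iter π 0 q = q := by
  simp [iter]

lemma iter_add (a b : ℕ) (q : Fin r × Fin r) : iter π a (iter π b q) = iter π (a + b) q := by
  simp [iter, pow_add, Equiv.Perm.mul_apply]

lemma not_mem_union_iff {q : Fin r × Fin r} :
    q ∉ Jp c ∪ Jm c ↔ (q.1.val < c ↔ q.2.val < c) := by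
  simp [Jp, Jm, Set.mem_union, Set.mem_setOf_eq]
  omega

lemma nu_lt_not_mem {q : Fin r × Fin r} {j : ℕ} (h0 : 0 < j) (hj : j < nu π c q) :
    iter π j q ∉ Jp c ∪ Jm c := by
  intro hmem
  have h : nu π c q ≤ j :=
    Nat.sInf_le (show j ∈ {ν : ℕ | 0 < ν ∧ iter π ν q ∈ Jp c ∪ Jm c} from ⟨h0, hmem⟩)
  omega

lemma Jm1_nu_pos {q : Fin r × Fin r} (hq : q ∈ Jm1 π c) : 0 < nu π c q := by
  rcases Nat.eq_zero_or_pos (nu π c q) with h | h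
  · exfalso
    have := hq.2
    rw [h, iter_zero] at this
    have h1 := hq.1
    simp [Jp, Jm, Set.mem_setOf_eq] at this h1
    omega
  · exact h

lemma nu_iter_of_Jm1 {q : Fin r × Fin r} (hq : q ∈ Jm1 π c) {s : ℕ} (h1 : 1 ≤ s)
    (h2 : s ≤ nu π c q - 1) :
    nu π c (iter π s q) = nu π c q - s ∧
      iter π (nu π c q - s) (iter π s q) ∈ Jp c := by
  have hpos := Jm1_nu_pos π c hq
  have hslt : s < nu π c q := by omega
  have hmem : (nu π c q - s) ∈ {ν : ℕ | 0 < ν ∧ iter π ν (iter π s q) ∈ Jp c ∪ Jm c} := by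
    constructor
    · omega
    · rw [iter_add]
      have : nu π c q - s + s = nu π c q := by omega
      rw [this]
      exact Set.mem_union_left _ hq.2
  have hle : nu π c (iter π s q) ≤ nu π c q - s := Nat.sInf_le hmem
  have hge : nu π c q - s ≤ nu π c (iter π s q) := by
    by_contra hlt
    push_neg at hlt
    have hne : {ν : ℕ | 0 < ν ∧ iter π ν (iter π s q) ∈ Jp c ∪ Jm c}.Nonempty := ⟨_, hmem⟩
    have hmm := Nat.sInf_mem hne
    change 0 < nu π c (iter π s q) ∧
      iter π (nu π c (iter π s q)) (iter π s q) ∈ Jp c ∪ Jm c at hmm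
    obtain ⟨hp0, hpmem⟩ := hmm
    rw [iter_add] at hpmem
    exact nu_lt_not_mem π c (by omega) (by omega) hpmem
  have heq : nu π c (iter π s q) = nu π c q - s := le_antisymm hle hge
  refine ⟨heq, ?_⟩
  rw [iter_add]
  have : nu π c q - s + s = nu π c q := by omega
  rw [this]
  exact hq.2

lemma Jz0_props {e : Fin r × Fin r} (he : e ∈ Jz0 π c) :
    1 ≤ nu π c e ∧ iter π (nu π c e) e ∈ Jp c ∧ e ∉ Jp c ∪ Jm c := by
  obtain ⟨q, hq, s, hs1, hs2, rfl⟩ := he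
  obtain ⟨heq, hland⟩ := nu_iter_of_Jm1 π c hq hs1 hs2
  have hpos := Jm1_nu_pos π c hq
  refine ⟨by omega, by rw [heq]; exact hland, ?_⟩
  exact nu_lt_not_mem π c (by omega) (by omega)

lemma Jz0_shift {e : Fin r × Fin r} (he : e ∈ Jz0 π c) (h2 : 2 ≤ nu π c e) :
    iter π 1 e ∈ Jz0 π c ∧ nu π c (iter π 1 e) = nu π c e - 1 := by
  obtain ⟨q, hq, s, hs1, hs2, rfl⟩ := he
  obtain ⟨heq, _⟩ := nu_iter_of_Jm1 π c hq hs1 hs2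
  have hpos := Jm1_nu_pos π c hq
  have hs2' : s + 1 ≤ nu π c q - 1 := by omega
  obtain ⟨heq', _⟩ := nu_iter_of_Jm1 π c hq (s := s + 1) (by omega) hs2'
  rw [iter_add, Nat.add_comm 1 s]
  refine ⟨⟨q, hq, s + 1, by omega, hs2', rfl⟩, ?_⟩
  rw [heq', heq]
  omega


-- chain machinery
lemma side_mono (v : ℕ → Fin r) (k : ℕ)
    (hch : ∀ i, 1 ≤ i → i ≤ k → (v i, v (i + 1)) ∈ Jz0 π c) :
    ∀ a b, 1 ≤ a → a ≤ b → b ≤ k + 1 → c ≤ ((π ^ 1) (v b)).val →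
      c ≤ ((π ^ 1) (v a)).val := by
  intro a b ha hab
  induction b, hab using Nat.le_induction with
  | base => intro _ h; exact h
  | succ b hb ih =>
    intro hbk hside
    have hbk1 : b ≤ k := by omega
    have hb1 : 1 ≤ b := by omega
    have he := hch b hb1 hbk1
    obtain ⟨hnu1, hland, _⟩ := Jz0_props π c he
    rcases eq_or_lt_of_le hnu1 with h1 | h2
    · -- nu = 1 : landing in Jp at time 1, first coordinate ≥ c
      rw [← h1] at hland
      have : c ≤ ((π ^ 1) (v b)).val := hland.2
      exact ih (by omega) this
    · -- nu ≥ 2 : at time 1 still in Jz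
      have hnm := nu_lt_not_mem π c (q := (v b, v (b + 1))) (j := 1) (by omega) h2
      rw [not_mem_union_iff] at hnm
      have : c ≤ ((π ^ 1) (v b)).val := by
        simp only [iter] at hnm
        omega
      exact ih (by omega) this

lemma nu_one_unique (v : ℕ → Fin r) (k : ℕ)
    (hch : ∀ i, 1 ≤ i → i ≤ k → (v i, v (i + 1)) ∈ Jz0 π c)
    {i j : ℕ} (hi1 : 1 ≤ i) (hik : i ≤ k) (hj1 : 1 ≤ j) (hjk : j ≤ k)
    (hni : nu π c (v i, v (i + 1)) = 1) (hnj : nu π c (v j, v (j + 1)) = 1) :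
    i = j := by
  have key : ∀ a b : ℕ, 1 ≤ a → a ≤ k → 1 ≤ b → b ≤ k → a < b →
      nu π c (v a, v (a + 1)) = 1 → nu π c (v b, v (b + 1)) = 1 → False := by
    intro a b ha1 hak hb1 hbk hab hna hnb
    obtain ⟨_, hlanda, _⟩ := Jz0_props π c (hch a ha1 hak)
    obtain ⟨_, hlandb, _⟩ := Jz0_props π c (hch b hb1 hbk)
    rw [hna] at hlanda
    rw [hnb] at hlandb
    -- (π^1 (v (a+1))).val < c  but  c ≤ (π^1 (v b)).val
    have h1 : ((π ^ 1) (v (a + 1))).val < c := hlanda.1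
    have h2 : c ≤ ((π ^ 1) (v b)).val := hlandb.2
    have := side_mono π c v k hch (a + 1) b (by omega) (by omega) (by omega) h2
    omega
  rcases lt_trichotomy i j with h | h | h
  · exact absurd (key i j hi1 hik hj1 hjk h hni hnj) (by simp)
  · exact h
  · exact absurd (key j i hj1 hjk hi1 hik h hnj hni) (by simp)

def Drel (u w : Fin r) : Prop :=
  ∃ t, 1 ≤ t ∧ (∀ j, 1 ≤ j → j < t → (((π ^ j) u).val < c ↔ ((π ^ j) w).val < c)) ∧
    c ≤ ((π ^ t) u).val ∧ ((π ^ t) w).val < c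

lemma Jz0_Drel {u w : Fin r} (h : (u, w) ∈ Jz0 π c) : Drel π c u w := by
  obtain ⟨h1, hland, _⟩ := Jz0_props π c h
  refine ⟨nu π c (u, w), h1, ?_, hland.2, hland.1⟩
  intro j hj1 hjt
  have hnm := nu_lt_not_mem π c (q := (u, w)) (by omega) hjt
  rw [not_mem_union_iff] at hnm
  exact hnm

lemma Drel_irrefl (u : Fin r) : ¬ Drel π c u u := by
  rintro ⟨t, _, _, h1, h2⟩
  omega

lemma Drel_trans {u v w : Fin r} (h1 : Drel π c u v) (h2 : Drel π c v w) :
    Drel π c u w := by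
  obtain ⟨t1, ht1, hbef1, hu1, hv1⟩ := h1
  obtain ⟨t2, ht2, hbef2, hv2, hw2⟩ := h2
  rcases lt_trichotomy t1 t2 with h | h | h
  · refine ⟨t1, ht1, ?_, hu1, ?_⟩
    · intro j hj1 hjt
      exact (hbef1 j hj1 hjt).trans (hbef2 j hj1 (by omega))
    · exact (hbef2 t1 ht1 h).mp hv1
  · subst h; omega
  · refine ⟨t2, ht2, ?_, ?_, hw2⟩
    · intro j hj1 hjt
      exact (hbef1 j hj1 (by omega)).trans (hbef2 j hj1 hjt)
    · have := (hbef1 t2 ht2 h).not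
      omega

lemma chain_Drel (v : ℕ → Fin r) (k : ℕ)
    (hch : ∀ i, 1 ≤ i → i ≤ k → (v i, v (i + 1)) ∈ Jz0 π c) :
    ∀ i j, 1 ≤ i → i < j → j ≤ k + 1 → Drel π c (v i) (v j) := by
  intro i j hi1 hij
  induction j, hij using Nat.le_induction with
  | base =>
    intro hjk
    exact Jz0_Drel π c (hch i hi1 (by omega))
  | succ j hj ih =>
    intro hjk
    have hd1 := ih (by omega)
    have hd2 := Jz0_Drel π c (hch j (by omega) (by omega))
    exact Drel_trans π c hd1 hd2

lemma chain_card (v : ℕ → Fin r) (k : ℕ)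
    (hch : ∀ i, 1 ≤ i → i ≤ k → (v i, v (i + 1)) ∈ Jz0 π c) :
    k + 1 ≤ r := by
  have hinj : Set.InjOn v (Finset.Icc 1 (k + 1)) := by
    intro i hi j hj hij
    simp only [Finset.coe_Icc, Set.mem_Icc] at hi hj
    by_contra hne
    rcases lt_trichotomy i j with h | h | h
    · have := chain_Drel π c v k hch i j (by omega) h (by omega)
      rw [hij] at this
      exact Drel_irrefl π c _ this
    · exact hne h
    · have := chain_Drel π c v k hch j i (by omega) h (by omega)
      rw [hij] at this
      exact Drel_irrefl π c _ this
  have hcard := Finset.card_le_card_of_injOn v (fun a _ => Finset.mem_univ (v a)) hinj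
  simpa using hcard


lemma sum_split {M : Type*} [AddCommMonoid M] (f : ℕ → M) {m k : ℕ} (h1 : 1 ≤ m)
    (h2 : m ≤ k) :
    ∑ i ∈ Finset.Icc 1 k, f i =
      (∑ i ∈ Finset.Icc 1 (m - 1), f i) + f m + ∑ i ∈ Finset.Icc (m + 1) k, f i := by
  have hset : Finset.Icc 1 k = (Finset.Icc 1 (m - 1)) ∪ insert m (Finset.Icc (m + 1) k) := by
    ext x
    simp only [Finset.mem_Icc, Finset.mem_union, Finset.mem_insert]
    omega
  have hdisj : Disjoint (Finset.Icc 1 (m - 1)) (insert m (Finset.Icc (m + 1) k)) := by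
    rw [Finset.disjoint_left]
    intro x hx hx'
    simp only [Finset.mem_Icc] at hx
    simp only [Finset.mem_insert, Finset.mem_Icc] at hx'
    omega
  have hnm : m ∉ Finset.Icc (m + 1) k := by
    simp only [Finset.mem_Icc]; omega
  rw [hset, Finset.sum_union hdisj, Finset.sum_insert hnm, add_assoc]

lemma reindex_sum {M : Type*} [AddCommMonoid M] (f : ℕ → M) (m k : ℕ) (hmk : m ≤ k) :
    ∑ i ∈ Finset.Icc (m + 1) k, f i = ∑ i ∈ Finset.Icc 1 (k - m), f (i + m) := by
  have h : Finset.Icc (m + 1) k = (Finset.Icc 1 (k - m)).map (addRightEmbedding m) := by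
    rw [Finset.map_add_right_Icc]
    congr 1 <;> omega
  rw [h, Finset.sum_map]
  rfl

lemma chain_weight : ∀ (N k : ℕ) (v : ℕ → Fin r),
    (∀ i, 1 ≤ i → i ≤ k → (v i, v (i + 1)) ∈ Jz0 π c) →
    (∑ i ∈ Finset.Icc 1 k, nu π c (v i, v (i + 1))) ≤ N →
    1 ≤ k →
    ∑ i ∈ Finset.Icc 1 k, (1 : ℚ) / 3 ^ (nu π c (v i, v (i + 1))) ≤
      1 - 2 * (1 / 3 : ℚ) ^ k := by
  intro N
  induction N using Nat.strong_induction_on with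
  | _ N ih =>
    intro k v hch hsum hk
    -- the "all ν ≥ 2, shift by π" step
    have key : ∀ (a : ℕ) (w : ℕ → Fin r),
        (∀ i, 1 ≤ i → i ≤ a → (w i, w (i + 1)) ∈ Jz0 π c ∧
          2 ≤ nu π c (w i, w (i + 1))) →
        (∑ i ∈ Finset.Icc 1 a, nu π c (w i, w (i + 1))) ≤ N →
        1 ≤ a →
        ∑ i ∈ Finset.Icc 1 a, (1 : ℚ) / 3 ^ (nu π c (w i, w (i + 1))) ≤
          (1 - 2 * (1 / 3 : ℚ) ^ a) / 3 := by
      intro a w hw hwsum ha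
      set w' : ℕ → Fin r := fun i => (π ^ 1) (w i) with hw'
      have hsh : ∀ i, 1 ≤ i → i ≤ a → (w' i, w' (i + 1)) ∈ Jz0 π c ∧
          nu π c (w i, w (i + 1)) = nu π c (w' i, w' (i + 1)) + 1 := by
        intro i h1 h2
        obtain ⟨hmem, h2nu⟩ := hw i h1 h2
        obtain ⟨hmem', heq'⟩ := Jz0_shift π c hmem h2nu
        have : iter π 1 (w i, w (i + 1)) = (w' i, w' (i + 1)) := rfl
        rw [this] at hmem' heq'
        exact ⟨hmem', by omega⟩
      have hch' : ∀ i, 1 ≤ i → i ≤ a → (w' i, w' (i + 1)) ∈ Jz0 π c :=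
        fun i h1 h2 => (hsh i h1 h2).1
      have hNpos : 1 ≤ N := by
        have h1a : (1 : ℕ) ∈ Finset.Icc 1 a := by simp [Finset.mem_Icc]; omega
        have h0 := Finset.single_le_sum (f := fun i => nu π c (w i, w (i + 1)))
          (fun i _ => Nat.zero_le _) h1a
        have h0' : nu π c (w 1, w (1 + 1)) ≤
            ∑ i ∈ Finset.Icc 1 a, nu π c (w i, w (i + 1)) := h0
        have hn1 := (hw 1 le_rfl ha).2
        omega
      have hsum' : (∑ i ∈ Finset.Icc 1 a, nu π c (w' i, w' (i + 1))) ≤ N - 1 := by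
        have hcongr : ∑ i ∈ Finset.Icc 1 a, nu π c (w i, w (i + 1)) =
            ∑ i ∈ Finset.Icc 1 a, (nu π c (w' i, w' (i + 1)) + 1) := by
          refine Finset.sum_congr rfl fun i hi => ?_
          simp only [Finset.mem_Icc] at hi
          exact (hsh i hi.1 hi.2).2
        rw [hcongr, Finset.sum_add_distrib, Finset.sum_const, Nat.card_Icc] at hwsum
        simp at hwsum
        omega
      have hihr := ih (N - 1) (by omega) a w' hch' hsum' ha
      have hrw : ∑ i ∈ Finset.Icc 1 a, (1 : ℚ) / 3 ^ (nu π c (w i, w (i + 1))) =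
          (1 / 3) * ∑ i ∈ Finset.Icc 1 a, (1 : ℚ) / 3 ^ (nu π c (w' i, w' (i + 1))) := by
        rw [Finset.mul_sum]
        refine Finset.sum_congr rfl fun i hi => ?_
        simp only [Finset.mem_Icc] at hi
        rw [(hsh i hi.1 hi.2).2, pow_succ]
        ring
      rw [hrw]
      linarith
    by_cases hex : ∃ m, 1 ≤ m ∧ m ≤ k ∧ nu π c (v m, v (m + 1)) = 1
    · obtain ⟨m, hm1, hmk, hnum⟩ := hex
      have hothers : ∀ i, 1 ≤ i → i ≤ k → i ≠ m → 2 ≤ nu π c (v i, v (i + 1)) := by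
        intro i h1 h2 hne
        have hge1 := (Jz0_props π c (hch i h1 h2)).1
        by_contra hlt
        push_neg at hlt
        have : nu π c (v i, v (i + 1)) = 1 := by omega
        exact hne (nu_one_unique π c v k hch h1 h2 hm1 hmk this hnum)
      have hsplitQ : ∑ i ∈ Finset.Icc 1 k, (1 : ℚ) / 3 ^ (nu π c (v i, v (i + 1))) =
          (∑ i ∈ Finset.Icc 1 (m - 1), (1 : ℚ) / 3 ^ (nu π c (v i, v (i + 1)))) +
            (1 : ℚ) / 3 ^ (nu π c (v m, v (m + 1))) +
            ∑ i ∈ Finset.Icc (m + 1) k, (1 : ℚ) / 3 ^ (nu π c (v i, v (i + 1))) :=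
        sum_split (M := ℚ) (fun i => (1 : ℚ) / 3 ^ (nu π c (v i, v (i + 1)))) hm1 hmk
      have hsubL : Finset.Icc 1 (m - 1) ⊆ Finset.Icc 1 k := by
        intro x hx; simp only [Finset.mem_Icc] at *; omega
      have hsubR : Finset.Icc (m + 1) k ⊆ Finset.Icc 1 k := by
        intro x hx; simp only [Finset.mem_Icc] at *; omega
      have hsumL : (∑ i ∈ Finset.Icc 1 (m - 1), nu π c (v i, v (i + 1))) ≤ N :=
        le_trans (Finset.sum_le_sum_of_subset hsubL) hsum
      have hsumR : (∑ i ∈ Finset.Icc (m + 1) k, nu π c (v i, v (i + 1))) ≤ N :=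
        le_trans (Finset.sum_le_sum_of_subset hsubR) hsum
      -- left bound
      have hpow_nonneg : ∀ n : ℕ, (0:ℚ) ≤ (1/3:ℚ) ^ n := fun n => by positivity
      have hL : ∑ i ∈ Finset.Icc 1 (m - 1), (1 : ℚ) / 3 ^ (nu π c (v i, v (i + 1))) ≤
          (if 1 ≤ m - 1 then (1 - 2 * (1 / 3 : ℚ) ^ (m - 1)) / 3 else 0) := by
        by_cases hm2 : 1 ≤ m - 1
        · rw [if_pos hm2]
          refine key (m - 1) v (fun i h1 h2 => ⟨hch i h1 (by omega),
            hothers i h1 (by omega) (by omega)⟩) hsumL hm2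
        · rw [if_neg hm2]
          have : m - 1 = 0 := by omega
          rw [this]
          simp
      -- right bound
      set b := k - m with hb
      have hreQ : ∑ i ∈ Finset.Icc (m + 1) k, (1 : ℚ) / 3 ^ (nu π c (v i, v (i + 1))) =
          ∑ i ∈ Finset.Icc 1 b, (1 : ℚ) / 3 ^ (nu π c (v (i + m), v (i + m + 1))) := by
        rw [reindex_sum (M := ℚ) (fun i => (1 : ℚ) / 3 ^ (nu π c (v i, v (i + 1)))) m k hmk]
      have hreN : ∑ i ∈ Finset.Icc (m + 1) k, nu π c (v i, v (i + 1)) =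
          ∑ i ∈ Finset.Icc 1 b, nu π c (v (i + m), v (i + m + 1)) := by
        rw [reindex_sum (M := ℕ) (fun i => nu π c (v i, v (i + 1))) m k hmk]
      have hR : ∑ i ∈ Finset.Icc (m + 1) k, (1 : ℚ) / 3 ^ (nu π c (v i, v (i + 1))) ≤
          (if 1 ≤ b then (1 - 2 * (1 / 3 : ℚ) ^ b) / 3 else 0) := by
        by_cases hb1 : 1 ≤ b
        · rw [if_pos hb1, hreQ]
          have hypA : ∀ i, 1 ≤ i → i ≤ b →
              ((fun i => v (i + m)) i, (fun i => v (i + m)) (i + 1)) ∈ Jz0 π c ∧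
                2 ≤ nu π c ((fun i => v (i + m)) i, (fun i => v (i + m)) (i + 1)) := by
            intro i h1 h2
            show (v (i + m), v (i + 1 + m)) ∈ Jz0 π c ∧
              2 ≤ nu π c (v (i + m), v (i + 1 + m))
            rw [show i + 1 + m = i + m + 1 by omega]
            exact ⟨hch (i + m) (by omega) (by omega),
              hothers (i + m) (by omega) (by omega) (by omega)⟩
          have hypB : ∑ i ∈ Finset.Icc 1 b,
              nu π c ((fun i => v (i + m)) i, (fun i => v (i + m)) (i + 1)) ≤ N := by
            have heq : ∑ i ∈ Finset.Icc 1 b,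
                nu π c ((fun i => v (i + m)) i, (fun i => v (i + m)) (i + 1)) =
                ∑ i ∈ Finset.Icc 1 b, nu π c (v (i + m), v (i + m + 1)) :=
              Finset.sum_congr rfl fun i _ => by
                show nu π c (v (i + m), v (i + 1 + m)) = _
                rw [show i + 1 + m = i + m + 1 by omega]
            rw [heq, ← hreN]
            exact hsumR
          have hkey := key b (fun i => v (i + m)) hypA hypB hb1
          have heq2 : ∑ i ∈ Finset.Icc 1 b,
              (1 : ℚ) / 3 ^ (nu π c ((fun i => v (i + m)) i, (fun i => v (i + m)) (i + 1))) =
              ∑ i ∈ Finset.Icc 1 b, (1 : ℚ) / 3 ^ (nu π c (v (i + m), v (i + m + 1))) :=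
            Finset.sum_congr rfl fun i _ => by
              show (1 : ℚ) / 3 ^ (nu π c (v (i + m), v (i + 1 + m))) = _
              rw [show i + 1 + m = i + m + 1 by omega]
          rw [heq2] at hkey
          exact hkey
        · rw [if_neg hb1]
          have : Finset.Icc (m + 1) k = ∅ := by
            apply Finset.Icc_eq_empty; omega
          rw [this]
          simp
      rw [hsplitQ, hnum]
      have hak : m - 1 ≤ k - 1 := by omega
      have hbk : b ≤ k - 1 := by omega
      have hmono : ∀ x y : ℕ, x ≤ y → (1/3:ℚ)^y ≤ (1/3:ℚ)^x := fun x y h =>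
        pow_le_pow_of_le_one (by norm_num) (by norm_num) h
      have hpk : (1/3:ℚ) ^ k = (1/3:ℚ) ^ (k - 1) * (1/3) := by
        rw [← pow_succ]
        congr 1
        omega
      by_cases ha1 : 1 ≤ m - 1 <;> by_cases hb1 : 1 ≤ b
      · rw [if_pos ha1] at hL; rw [if_pos hb1] at hR
        have h1 := hmono _ _ hak
        have h2 := hpow_nonneg b
        simp only [pow_one]
        nlinarith [hpow_nonneg (m-1)]
      · rw [if_pos ha1] at hL; rw [if_neg hb1] at hR
        have h1 := hmono _ _ hak
        simp only [pow_one]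
        nlinarith [hpow_nonneg (m-1)]
      · rw [if_neg ha1] at hL; rw [if_pos hb1] at hR
        have h1 := hmono _ _ hbk
        simp only [pow_one]
        nlinarith [hpow_nonneg b]
      · rw [if_neg ha1] at hL; rw [if_neg hb1] at hR
        have hk1 : k = 1 := by omega
        subst hk1
        simp only [pow_one]
        nlinarith
    · push_neg at hex
      have hall : ∀ i, 1 ≤ i → i ≤ k → (v i, v (i + 1)) ∈ Jz0 π c ∧
          2 ≤ nu π c (v i, v (i + 1)) := by
        intro i h1 h2
        have hge1 := (Jz0_props π c (hch i h1 h2)).1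
        have := hex i h1 h2
        exact ⟨hch i h1 h2, by omega⟩
      have := key k v hall hsum hk
      have h1 : (1/3:ℚ)^k ≤ (1/3:ℚ)^1 :=
        pow_le_pow_of_le_one (by norm_num) (by norm_num) hk
      simp only [pow_one] at h1
      linarith


open scoped Classical in
lemma kappa_eq (s : ℕ) (γ : ℕ → Fin r) :
    kappa 3 π c s γ =
      ∑ ℓ ∈ (Finset.Icc 1 (s - 1)).filter (fun ℓ => (γ ℓ, γ (ℓ + 1)) ∈ Jz0 π c),
        (1 : ℚ) / 3 ^ (nu π c (γ ℓ, γ (ℓ + 1))) := by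
  set T := (Finset.Icc 1 (s - 1)).filter (fun ℓ => (γ ℓ, γ (ℓ + 1)) ∈ Jz0 π c) with hT
  set I := T.image (fun ℓ => nu π c (γ ℓ, γ (ℓ + 1))) with hI
  have hncount : ∀ t, nCount π c s γ t =
      (T.filter (fun ℓ => nu π c (γ ℓ, γ (ℓ + 1)) = t)).card := by
    intro t
    rw [nCount, ← Set.ncard_coe_finset]
    congr 1
    ext ℓ
    simp only [hT, Finset.coe_filter, Finset.mem_filter, Finset.mem_Icc, Set.mem_setOf_eq]
    tauto
  set f : ℕ → ℚ := fun t => if 1 ≤ t then (nCount π c s γ t : ℚ) / ((3 : ℕ) : ℚ) ^ t else 0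
    with hf
  have hsupp : Function.support f ⊆ ↑I := by
    intro t ht
    simp only [Function.mem_support, hf] at ht
    by_cases h1 : 1 ≤ t
    · rw [if_pos h1] at ht
      have hcard : (nCount π c s γ t : ℚ) ≠ 0 := by
        intro h
        rw [h] at ht
        simp at ht
      rw [hncount t] at hcard
      have : (T.filter (fun ℓ => nu π c (γ ℓ, γ (ℓ + 1)) = t)).Nonempty := by
        rw [Finset.nonempty_iff_ne_empty]
        intro h
        rw [h] at hcard
        simp at hcard
      obtain ⟨ℓ, hℓ⟩ := this
      obtain ⟨hℓT, hℓt⟩ := Finset.mem_filter.mp hℓ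
      exact Finset.mem_coe.mpr (Finset.mem_image.mpr ⟨ℓ, hℓT, hℓt⟩)
    · rw [if_neg h1] at ht
      exact absurd rfl ht
  have hstep : kappa 3 π c s γ = ∑ t ∈ I, f t :=
    finsum_eq_sum_of_support_subset f hsupp
  rw [hstep]
  have hstep2 : ∀ t ∈ I, f t =
      ∑ ℓ ∈ T.filter (fun ℓ => nu π c (γ ℓ, γ (ℓ + 1)) = t),
        (1 : ℚ) / 3 ^ (nu π c (γ ℓ, γ (ℓ + 1))) := by
    intro t ht
    obtain ⟨ℓ0, hℓ0T, hℓ0t⟩ := Finset.mem_image.mp ht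
    have hz : (γ ℓ0, γ (ℓ0 + 1)) ∈ Jz0 π c := (Finset.mem_filter.mp hℓ0T).2
    have h1t : 1 ≤ t := hℓ0t ▸ (Jz0_props π c hz).1
    simp only [hf, if_pos h1t, hncount t]
    have : ∑ ℓ ∈ T.filter (fun ℓ => nu π c (γ ℓ, γ (ℓ + 1)) = t),
        (1 : ℚ) / 3 ^ (nu π c (γ ℓ, γ (ℓ + 1))) =
        ∑ _ℓ ∈ T.filter (fun ℓ => nu π c (γ ℓ, γ (ℓ + 1)) = t), (1 : ℚ) / 3 ^ t := by
      refine Finset.sum_congr rfl fun ℓ hℓ => ?_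
      rw [(Finset.mem_filter.mp hℓ).2]
    rw [this, Finset.sum_const, nsmul_eq_mul]
    push_cast
    ring
  rw [Finset.sum_congr rfl hstep2]
  exact Finset.sum_fiberwise_of_maps_to
    (fun ℓ hℓ => Finset.mem_image_of_mem _ hℓ) _

lemma w_le_third {e : Fin r × Fin r} (he : e ∈ Jz0 π c) :
    (1 : ℚ) / 3 ^ (nu π c e) ≤ 1 / 3 := by
  have h1 := (Jz0_props π c he).1
  have : ((1 : ℚ)/3) ^ (nu π c e) ≤ ((1 : ℚ)/3) ^ 1 :=
    pow_le_pow_of_le_one (by norm_num) (by norm_num) h1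
  rw [div_pow, one_pow, pow_one] at this
  linarith

lemma B0_nonneg (hr : 2 ≤ r) : (0 : ℚ) ≤ 1 - 2 * (1 / 3 : ℚ) ^ (r - 1) := by
  have : ((1 : ℚ)/3) ^ (r - 1) ≤ ((1 : ℚ)/3) ^ 1 :=
    pow_le_pow_of_le_one (by norm_num) (by norm_num) (by omega)
  rw [pow_one] at this
  linarith

-- bound for any Jz0-chain appearing as edges 1..k of a path
open scoped Classical in
lemma chain_final_bound (k : ℕ) (v : ℕ → Fin r) (hr : 2 ≤ r)
    (hch : ∀ i, 1 ≤ i → i ≤ k → (v i, v (i + 1)) ∈ Jz0 π c) :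
    ∑ i ∈ Finset.Icc 1 k, (1 : ℚ) / 3 ^ (nu π c (v i, v (i + 1))) ≤
      1 - 2 * (1 / 3 : ℚ) ^ (r - 1) := by
  by_cases hk : 1 ≤ k
  · have hw := chain_weight π c (∑ i ∈ Finset.Icc 1 k, nu π c (v i, v (i + 1))) k v hch
      le_rfl hk
    have hcard := chain_card π c v k hch
    have hmono : ((1 : ℚ)/3) ^ (r - 1) ≤ ((1 : ℚ)/3) ^ k :=
      pow_le_pow_of_le_one (by norm_num) (by norm_num) (by omega)
    linarith
  · have : k = 0 := by omega
    subst this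
    simp only [Finset.Icc_eq_empty_of_lt (by norm_num : (1:ℕ) > 0), Finset.sum_empty]
    exact B0_nonneg hr

open scoped Classical in
lemma kappa_gamma_le (s : ℕ) (γ : ℕ → Fin r) (hr : 2 ≤ r)
    (h : inGamma π c s γ) :
    kappa 3 π c s γ ≤ 1 - 2 * (1 / 3 : ℚ) ^ (r - 1) := by
  obtain ⟨hs2, hedges, hlast⟩ := h
  rw [kappa_eq]
  have hTeq : (Finset.Icc 1 (s - 1)).filter (fun ℓ => (γ ℓ, γ (ℓ + 1)) ∈ Jz0 π c) =
      Finset.Icc 1 (s - 2) := by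
    ext ℓ
    simp only [Finset.mem_filter, Finset.mem_Icc]
    constructor
    · rintro ⟨⟨h1, h2⟩, hz⟩
      refine ⟨h1, ?_⟩
      by_contra hgt
      have hℓeq : ℓ = s - 1 := by omega
      subst hℓeq
      have hnm := (Jz0_props π c hz).2.2
      have : (γ (s - 1), γ (s - 1 + 1)) ∈ Jp c := by
        rw [show s - 1 + 1 = s by omega]
        exact hlast.1
      exact hnm (Set.mem_union_left _ this)
    · rintro ⟨h1, h2⟩
      exact ⟨⟨h1, by omega⟩, hedges ℓ h1 h2⟩
  rw [hTeq]
  exact chain_final_bound π c (s - 2) γ hr (fun i h1 h2 => hedges i h1 h2)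

open scoped Classical in
lemma kappa_delta_le (s : ℕ) (γ : ℕ → Fin r) (hr : 2 ≤ r)
    (h : inDelta π c s γ) :
    kappa 3 π c s γ ≤ (1 - 2 * (1 / 3 : ℚ) ^ (r - 1)) + 1 / 3 := by
  obtain ⟨hs3, ⟨hs2', hedges, hmid⟩, hlastz⟩ := h
  rw [kappa_eq]
  have hTeq : (Finset.Icc 1 (s - 1)).filter (fun ℓ => (γ ℓ, γ (ℓ + 1)) ∈ Jz0 π c) =
      insert (s - 1) (Finset.Icc 1 (s - 3)) := by
    ext ℓ
    simp only [Finset.mem_filter, Finset.mem_Icc, Finset.mem_insert]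
    constructor
    · rintro ⟨⟨h1, h2⟩, hz⟩
      by_cases hl1 : ℓ = s - 1
      · exact Or.inl hl1
      · right
        refine ⟨h1, ?_⟩
        by_contra hgt
        have hℓeq : ℓ = s - 2 := by omega
        subst hℓeq
        have hnm := (Jz0_props π c hz).2.2
        have : (γ (s - 2), γ (s - 2 + 1)) ∈ Jp c := by
          have h' : (γ (s - 1 - 1), γ (s - 1)) ∈ Jp2 π c := hmid
          rw [show s - 1 - 1 = s - 2 by omega] at h'
          rw [show s - 2 + 1 = s - 1 by omega]
          exact h'.1
        exact hnm (Set.mem_union_left _ this)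
    · rintro (hl | ⟨h1, h2⟩)
      · subst hl
        refine ⟨⟨by omega, le_rfl⟩, ?_⟩
        rw [show s - 1 + 1 = s by omega]
        exact hlastz
      · refine ⟨⟨h1, by omega⟩, ?_⟩
        exact hedges ℓ h1 (by omega)
  rw [hTeq, Finset.sum_insert (by simp only [Finset.mem_Icc]; omega)]
  have hb1 : (1 : ℚ) / 3 ^ (nu π c (γ (s - 1), γ (s - 1 + 1))) ≤ 1 / 3 := by
    rw [show s - 1 + 1 = s by omega]
    exact w_le_third π c hlastz
  have hb2 := chain_final_bound π c (s - 3) γ hr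
    (fun i h1 h2 => hedges i h1 (by omega))
  linarith



end Aux


theorem statement_9 (p : ℕ) (hp : p = 3)
    (c d : ℕ) (hc : 0 < c) (hd : 0 < d)
    (π : Equiv.Perm (Fin (c + d))) :
    kappaPerm p π c < 4 / 3 := by
  subst hp
  have hr : 2 ≤ c + d := by omega
  have hB0 := B0_nonneg (r := c + d) hr
  set B : ℚ := (1 - 2 * (1 / 3 : ℚ) ^ (c + d - 1)) + 1 / 3 with hBdef
  have hBnonneg : (0 : ℝ) ≤ (B : ℝ) := by
    have : (0 : ℚ) ≤ B := by rw [hBdef]; linarith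
    exact_mod_cast this
  have hle : kappaPerm 3 π c ≤ (B : ℝ) := by
    apply Real.sSup_le _ hBnonneg
    intro x hx
    rcases Set.mem_insert_iff.mp hx with rfl | hx
    · exact hBnonneg
    · obtain ⟨s, γ, hmem, rfl⟩ := hx
      rw [Rat.cast_le]
      rcases hmem with hg | hd'
      · have := kappa_gamma_le π c s γ hr hg.1
        rw [hBdef]
        linarith
      · have := kappa_delta_le π c s γ hr hd'.1
        rw [hBdef]
        linarith
  have hlt : (B : ℝ) < 4 / 3 := by
    have hpow : (0 : ℚ) < (1 / 3 : ℚ) ^ (c + d - 1) := by positivity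
    have h2 : B < 4 / 3 := by rw [hBdef]; linarith
    have h3 := (Rat.cast_lt (K := ℝ)).mpr h2
    push_cast at h3
    exact h3
  exact lt_of_le_of_lt hle hlt

end PaperPurity
end

section
/- With the combinatorial setup below, every element γ = (i₁,…,i_s) ∈ Γ satisfies s ≤ d + 1; consequently γ has at most d − 1 consecutive pairs lying in J₀,₀, i.e. Σ_{t≥1} n_t(γ) = s − 2 ≤ d − 1. -/
namespace PaperPurity

variable {r : ℕ}

-- ### Auxiliary material for `statement_11`

lemma iter_iter (π : Equiv.Perm (Fin r)) (s t : ℕ) (q : Fin r × Fin r) :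
    iter π s (iter π t q) = iter π (s + t) q := by
  simp [iter, pow_add, Equiv.Perm.mul_apply]

lemma mem_Jp_iff {c : ℕ} {q : Fin r × Fin r} : q ∈ Jp c ↔ q.2.val < c ∧ c ≤ q.1.val := Iff.rfl
lemma mem_Jz_iff {c : ℕ} {q : Fin r × Fin r} :
    q ∈ Jz c ↔ (q.1.val < c ∧ q.2.val < c) ∨ (c ≤ q.1.val ∧ c ≤ q.2.val) := Iff.rfl
lemma mem_Jm_iff {c : ℕ} {q : Fin r × Fin r} : q ∈ Jm c ↔ q.1.val < c ∧ c ≤ q.2.val := Iff.rfl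

lemma mem_Jz_of_not {c : ℕ} {q : Fin r × Fin r} (h : q ∉ Jp c ∪ Jm c) : q ∈ Jz c := by
  simp only [Set.mem_union, mem_Jp_iff, mem_Jm_iff, not_or] at h
  rw [mem_Jz_iff]; omega

/-- The chain property extracted from membership in `J₀,₀`: there is a residual time `ν ≥ 1`
at which the pair enters `J₊`, all intermediate iterates lying in `J₀`. -/
def ZC (π : Equiv.Perm (Fin r)) (c : ℕ) (a b : Fin r) (ν : ℕ) : Prop :=
  0 < ν ∧ iter π ν (a, b) ∈ Jp c ∧ ∀ u, 0 < u → u < ν → iter π u (a, b) ∈ Jz c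

lemma Jz0_props_s11 {π : Equiv.Perm (Fin r)} {c : ℕ} {q : Fin r × Fin r} (h : q ∈ Jz0 π c) :
    q ∈ Jz c ∧ ∃ ν, ZC π c q.1 q.2 ν := by
  obtain ⟨b, ⟨hbm, hbp⟩, t, ht1, ht2, rfl⟩ := h
  rw [mem_Jm_iff] at hbm
  have hN0 : 0 < nu π c b := by
    rcases Nat.eq_zero_or_pos (nu π c b) with h0 | h0
    · rw [h0] at hbp
      have h1 : (iter π 0 b) = b := by simp [iter]
      rw [h1, mem_Jp_iff] at hbp
      omega
    · exact h0
  have htN : t < nu π c b := by omega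
  have hmid : ∀ u, 0 < u → u < nu π c b → iter π u b ∈ Jz c := by
    intro u hu1 hu2
    refine mem_Jz_of_not (fun hmem => ?_)
    exact Nat.notMem_of_lt_sInf hu2 ⟨hu1, hmem⟩
  have hq : ∀ u, iter π u (((iter π t b).1, (iter π t b).2)) = iter π (u + t) b := by
    intro u
    have : ((iter π t b).1, (iter π t b).2) = iter π t b := rfl
    rw [this, iter_iter]
  constructor
  · exact hmid t ht1 htN
  · refine ⟨nu π c b - t, by omega, ?_, ?_⟩
    · rw [hq, Nat.sub_add_cancel (le_of_lt htN)]
      exact hbp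
    · intro u hu1 hu2
      rw [hq]
      exact hmid (u + t) (by omega) (by omega)

lemma nu_pos_of_ZC {π : Equiv.Perm (Fin r)} {c : ℕ} {a b : Fin r} {ν : ℕ}
    (h : ZC π c a b ν) : 0 < nu π c (a, b) := by
  have hmem : ν ∈ {ν : ℕ | 0 < ν ∧ iter π ν (a, b) ∈ Jp c ∪ Jm c} := ⟨h.1, Or.inl h.2.1⟩
  have hne : {ν : ℕ | 0 < ν ∧ iter π ν (a, b) ∈ Jp c ∪ Jm c}.Nonempty := ⟨ν, hmem⟩
  exact (Nat.sInf_mem hne).1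

lemma ZC.shift {π : Equiv.Perm (Fin r)} {c : ℕ} {a b : Fin r} {ν E : ℕ}
    (h : ZC π c a b ν) (hE : 0 < E) (hE' : E < ν) :
    ZC π c ((π ^ E) a) ((π ^ E) b) (ν - E) := by
  have hq : ∀ u, iter π u ((π ^ E) a, (π ^ E) b) = iter π (u + E) (a, b) := by
    intro u
    have : ((π ^ E) a, (π ^ E) b) = iter π E (a, b) := rfl
    rw [this, iter_iter]
  refine ⟨by omega, ?_, ?_⟩
  · rw [hq, Nat.sub_add_cancel (le_of_lt hE')]; exact h.2.1
  · intro u hu1 hu2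
    rw [hq]
    exact h.2.2 (u + E) (by omega) (by omega)

/-- Stage 1: around a loop of `ZC` pairs, the first-left-crossing times are constant. -/
lemma stage1 {π : Equiv.Perm (Fin r)} {c : ℕ} {n : ℕ} {δ : ℕ → Fin r} {ν : ℕ → ℕ}
    (hn : 0 < n) (hZ : ∀ k, k < n → ZC π c (δ k) (δ (k + 1)) (ν k)) (hδ : δ n = δ 0) :
    ∃ E, 0 < E ∧ (∀ k, k < n → E < ν k) ∧ ∀ k, k ≤ n → ((π ^ E) (δ k)).val < c := by
  classical
  set T : ℕ → Set ℕ := fun k => {t | 0 < t ∧ ((π ^ t) (δ k)).val < c} with hT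
  set f : ℕ → ℕ := fun k => sInf (T k) with hf
  have hνT : ∀ k, k < n → ν k ∈ T (k + 1) := by
    intro k hk
    have h2 := (hZ k hk).2.1
    rw [mem_Jp_iff] at h2
    exact ⟨(hZ k hk).1, h2.1⟩
  have hne : ∀ k, k ≤ n → (T k).Nonempty := by
    intro k hk
    rcases Nat.eq_zero_or_pos k with rfl | hk0
    · have := hνT (n - 1) (by omega)
      have hn1 : n - 1 + 1 = n := by omega
      rw [hn1] at this
      rw [hT] at this ⊢
      simp only [Set.mem_setOf_eq] at this ⊢
      rw [hδ] at this
      exact ⟨ν (n - 1), this⟩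
    · have := hνT (k - 1) (by omega)
      have hk1 : k - 1 + 1 = k := by omega
      rw [hk1] at this
      exact ⟨ν (k - 1), this⟩
  have hmemf : ∀ k, k ≤ n → f k ∈ T k := fun k hk => Nat.sInf_mem (hne k hk)
  have hfν : ∀ k, k < n → f (k + 1) ≤ ν k := fun k hk => Nat.sInf_le (hνT k hk)
  have hstep : ∀ k, k < n → f (k + 1) ≤ f k := by
    intro k hk
    by_contra hlt
    push_neg at hlt
    have h1 : f k ∈ T k := hmemf k (by omega)
    have h2 : f k < ν k := lt_of_lt_of_le hlt (hfν k hk)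
    have h3 := (hZ k hk).2.2 (f k) h1.1 h2
    rw [mem_Jz_iff] at h3
    simp only [iter] at h3
    have h4 : ((π ^ f k) (δ (k + 1))).val < c := by
      rcases h3 with ⟨_, h⟩ | ⟨h, _⟩
      · exact h
      · have h12 := h1.2
        omega
    have : f (k + 1) ≤ f k := Nat.sInf_le ⟨h1.1, h4⟩
    omega
  have hupper : ∀ m, m ≤ n → f m ≤ f 0 := by
    intro m
    induction m with
    | zero => intro _; exact le_refl _
    | succ m ih => intro hm; exact le_trans (hstep m (by omega)) (ih (by omega))
  have hf0n : f n = f 0 := by rw [hf]; simp only [hT, hδ]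
  have hlower : ∀ j, j ≤ n → f 0 ≤ f (n - j) := by
    intro j
    induction j with
    | zero => intro _; simp [hf0n]
    | succ j ih =>
      intro hj
      have h1 : f 0 ≤ f (n - j) := ih (by omega)
      have h2 : n - j = (n - (j + 1)) + 1 := by omega
      rw [h2] at h1
      exact le_trans h1 (hstep (n - (j + 1)) (by omega))
  have hconst : ∀ k, k ≤ n → f k = f 0 := by
    intro k hk
    have h1 := hupper k hk
    have h2 := hlower (n - k) (by omega)
    have h3 : n - (n - k) = k := by omega
    rw [h3] at h2
    omega
  refine ⟨f 0, (hmemf 0 (by omega)).1, ?_, ?_⟩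
  · intro k hk
    have h1 : f 0 ≤ ν k := by
      have := hfν k hk
      rw [hconst (k + 1) (by omega)] at this
      exact this
    rcases lt_or_eq_of_le h1 with h | h
    · exact h
    · exfalso
      have h2 : f k ∈ T k := hmemf k (by omega)
      rw [hconst k (by omega), h] at h2
      have h3 := (hZ k hk).2.1
      rw [mem_Jp_iff] at h3
      simp only [iter] at h3
      have h2' := h2.2
      exact absurd h3.2 (by omega)
  · intro k hk
    have h2 := hmemf k hk
    rw [hconst k hk] at h2
    exact h2.2

/-- Stage 2: around a loop of `ZC` pairs, the first-right-crossing times are constant. -/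
lemma stage2 {π : Equiv.Perm (Fin r)} {c : ℕ} {n : ℕ} {δ : ℕ → Fin r} {ν : ℕ → ℕ}
    (hn : 0 < n) (hZ : ∀ k, k < n → ZC π c (δ k) (δ (k + 1)) (ν k)) (hδ : δ n = δ 0) :
    ∃ E, 0 < E ∧ (∀ k, k < n → E < ν k) ∧ ∀ k, k ≤ n → c ≤ ((π ^ E) (δ k)).val := by
  classical
  set T : ℕ → Set ℕ := fun k => {t | 0 < t ∧ c ≤ ((π ^ t) (δ k)).val} with hT
  set f : ℕ → ℕ := fun k => sInf (T k) with hf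
  have hνT : ∀ k, k < n → ν k ∈ T k := by
    intro k hk
    have h2 := (hZ k hk).2.1
    rw [mem_Jp_iff] at h2
    exact ⟨(hZ k hk).1, h2.2⟩
  have hne : ∀ k, k ≤ n → (T k).Nonempty := by
    intro k hk
    rcases Nat.eq_or_lt_of_le hk with rfl | hk0
    · have := hνT 0 (by omega)
      rw [hT] at this ⊢
      simp only [Set.mem_setOf_eq] at this ⊢
      rw [hδ]
      exact ⟨ν 0, this⟩
    · exact ⟨ν k, hνT k (by omega)⟩
  have hmemf : ∀ k, k ≤ n → f k ∈ T k := fun k hk => Nat.sInf_mem (hne k hk)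
  have hfν : ∀ k, k < n → f k ≤ ν k := fun k hk => Nat.sInf_le (hνT k hk)
  have hstep : ∀ k, k < n → f k ≤ f (k + 1) := by
    intro k hk
    by_contra hlt
    push_neg at hlt
    have h1 : f (k + 1) ∈ T (k + 1) := hmemf (k + 1) (by omega)
    have h2 : f (k + 1) < ν k := lt_of_lt_of_le hlt (hfν k hk)
    have h3 := (hZ k hk).2.2 (f (k + 1)) h1.1 h2
    rw [mem_Jz_iff] at h3
    simp only [iter] at h3
    have h4 : c ≤ ((π ^ f (k + 1)) (δ k)).val := by
      rcases h3 with ⟨h, _⟩ | ⟨h, _⟩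
      · exfalso; have := h1.2; omega
      · exact h
    have : f k ≤ f (k + 1) := Nat.sInf_le ⟨h1.1, h4⟩
    omega
  have hf0n : f n = f 0 := by rw [hf]; simp only [hT, hδ]
  have hupper : ∀ m, m ≤ n → f 0 ≤ f m := by
    intro m
    induction m with
    | zero => intro _; exact le_refl _
    | succ m ih => intro hm; exact le_trans (ih (by omega)) (hstep m (by omega))
  have hlower : ∀ j, j ≤ n → f (n - j) ≤ f 0 := by
    intro j
    induction j with
    | zero => intro _; simp [hf0n]
    | succ j ih =>
      intro hj
      have h1 : f (n - j) ≤ f 0 := ih (by omega)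
      have h2 : n - j = (n - (j + 1)) + 1 := by omega
      rw [h2] at h1
      exact le_trans (hstep (n - (j + 1)) (by omega)) h1
  have hconst : ∀ k, k ≤ n → f k = f 0 := by
    intro k hk
    have h1 := hupper k hk
    have h2 := hlower (n - k) (by omega)
    have h3 : n - (n - k) = k := by omega
    rw [h3] at h2
    omega
  refine ⟨f 0, (hmemf 0 (by omega)).1, ?_, ?_⟩
  · intro k hk
    have h1 : f 0 ≤ ν k := by
      have := hfν k hk
      rw [hconst k (by omega)] at this
      exact this
    rcases lt_or_eq_of_le h1 with h | h
    · exact h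
    · exfalso
      have h2 : f (k + 1) ∈ T (k + 1) := hmemf (k + 1) (by omega)
      rw [hconst (k + 1) (by omega), h] at h2
      have h3 := (hZ k hk).2.1
      rw [mem_Jp_iff] at h3
      simp only [iter] at h3
      have h2' := h2.2
      exact absurd h3.1 (by omega)
  · intro k hk
    have h2 := hmemf k hk
    rw [hconst k hk] at h2
    exact h2.2

/-- There is no loop of `ZC` pairs. -/
lemma noLoop (π : Equiv.Perm (Fin r)) (c : ℕ) (N : ℕ) :
    ∀ (n : ℕ) (δ : ℕ → Fin r) (ν : ℕ → ℕ), 0 < n →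
    (∀ k, k < n → ZC π c (δ k) (δ (k + 1)) (ν k)) → δ n = δ 0 → ν 0 ≤ N → False := by
  induction N with
  | zero =>
    intro n δ ν hn hZ hδ hb
    exact absurd (hZ 0 hn).1 (by omega)
  | succ N ih =>
    intro n δ ν hn hZ hδ hb
    obtain ⟨E, hE0, hEν, _⟩ := stage1 hn hZ hδ
    have hZ' : ∀ k, k < n →
        ZC π c ((π ^ E) (δ k)) ((π ^ E) (δ (k + 1))) (ν k - E) :=
      fun k hk => (hZ k hk).shift hE0 (hEν k hk)
    have hδ' : (fun k => (π ^ E) (δ k)) n = (fun k => (π ^ E) (δ k)) 0 := by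
      simp only []; rw [hδ]
    obtain ⟨F, hF0, hFν, _⟩ := stage2 (δ := fun k => (π ^ E) (δ k)) (ν := fun k => ν k - E)
      hn hZ' hδ'
    have hZ'' : ∀ k, k < n →
        ZC π c ((π ^ F) ((π ^ E) (δ k))) ((π ^ F) ((π ^ E) (δ (k + 1)))) (ν k - E - F) :=
      fun k hk => (hZ' k hk).shift hF0 (hFν k hk)
    have hδ'' : (fun k => (π ^ F) ((π ^ E) (δ k))) n = (fun k => (π ^ F) ((π ^ E) (δ k))) 0 := by
      simp only []; rw [hδ]
    refine ih n _ (fun k => ν k - E - F) hn hZ'' hδ'' ?_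
    have h1 : E < ν 0 := hEν 0 hn
    have h2 : F < ν 0 - E := hFν 0 hn
    show ν 0 - E - F ≤ N
    omega


theorem statement_11 (c d : ℕ) (hc : 0 < c) (hd : 0 < d)
    (π : Equiv.Perm (Fin (c + d))) (s : ℕ) (γ : ℕ → Fin (c + d))
    (hγ : inGamma π c s γ) :
    s ≤ d + 1 ∧ (∑ᶠ t : ℕ, if 1 ≤ t then nCount π c s γ t else 0) = s - 2 ∧
      s - 2 ≤ d - 1 := by
  classical
  obtain ⟨hs2, hZ0, hP2⟩ := hγ
  have hlastJp : (γ (s - 1), γ s) ∈ Jp c := hP2.1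
  -- all of γ 1, …, γ (s-1) lie on the right block
  have hside0 : ∀ j, j ≤ s - 2 → c ≤ (γ (s - 1 - j)).val := by
    intro j
    induction j with
    | zero =>
      intro _
      rw [mem_Jp_iff] at hlastJp
      exact hlastJp.2
    | succ j ih =>
      intro hj
      have h1 : c ≤ (γ (s - 1 - j)).val := ih (by omega)
      have hz : (γ (s - 2 - j), γ (s - 2 - j + 1)) ∈ Jz0 π c := hZ0 _ (by omega) (by omega)
      have hz2 := (Jz0_props_s11 hz).1
      rw [mem_Jz_iff] at hz2
      have he : s - 2 - j + 1 = s - 1 - j := by omega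
      rw [he] at hz2
      have he2 : s - 1 - (j + 1) = s - 2 - j := by omega
      rw [he2]
      simp only [] at hz2
      omega
  have hside : ∀ ℓ, 1 ≤ ℓ → ℓ ≤ s - 1 → c ≤ (γ ℓ).val := by
    intro ℓ h1 h2
    have h3 := hside0 (s - 1 - ℓ) (by omega)
    have he : s - 1 - (s - 1 - ℓ) = ℓ := by omega
    rwa [he] at h3
  -- injectivity of γ on [1, s-1], via the no-loop lemma
  have hkey : ∀ a b, 1 ≤ a → a < b → b ≤ s - 1 → γ a ≠ γ b := by
    intro a b ha hab hb hne
    have hex : ∀ k, ∃ ν, k < b - a → ZC π c (γ (a + k)) (γ (a + k + 1)) ν := by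
      intro k
      by_cases hk : k < b - a
      · obtain ⟨ν, hν⟩ := (Jz0_props_s11 (hZ0 (a + k) (by omega) (by omega))).2
        exact ⟨ν, fun _ => hν⟩
      · exact ⟨1, fun h => absurd h hk⟩
    choose ν hν using hex
    refine noLoop π c (ν 0) (b - a) (fun k => γ (a + k)) ν (by omega)
      (fun k hk => hν k hk) ?_ le_rfl
    show γ (a + (b - a)) = γ (a + 0)
    have he : a + (b - a) = b := by omega
    rw [he, Nat.add_zero]
    exact hne.symm
  have hinj : Set.InjOn γ ↑(Finset.Icc 1 (s - 1)) := by
    intro a ha b hb hab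
    simp only [Finset.coe_Icc, Set.mem_Icc] at ha hb
    by_contra hne
    rcases lt_or_gt_of_ne hne with h | h
    · exact hkey a b ha.1 h hb.2 hab
    · exact hkey b a hb.1 h ha.2 hab.symm
  -- cardinality bound
  have hmaps : ∀ ℓ ∈ Finset.Icc 1 (s - 1),
      γ ℓ ∈ Finset.univ.filter (fun x : Fin (c + d) => c ≤ x.val) := by
    intro ℓ hℓ
    rw [Finset.mem_Icc] at hℓ
    simp only [Finset.mem_filter, Finset.mem_univ, true_and]
    exact hside ℓ hℓ.1 hℓ.2
  have hcard := Finset.card_le_card_of_injOn γ hmaps hinj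
  have h1 : (Finset.Icc 1 (s - 1)).card = s - 1 := by
    rw [Nat.card_Icc]; omega
  have hfim : Finset.univ.filter (fun x : Fin (c + d) => c ≤ x.val) =
      Finset.univ.image (fun i : Fin d => (⟨c + i.val, by omega⟩ : Fin (c + d))) := by
    ext x
    simp only [Finset.mem_filter, Finset.mem_univ, true_and, Finset.mem_image]
    constructor
    · intro hx
      have hx2 : x.val < c + d := x.isLt
      refine ⟨⟨x.val - c, by omega⟩, ?_⟩
      apply Fin.ext
      simp only []
      omega
    · rintro ⟨i, _, rfl⟩
      simp only []
      omega
  have hinj2 : Function.Injective (fun i : Fin d => (⟨c + i.val, by omega⟩ : Fin (c + d))) := by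
    intro i j hij
    have := congrArg Fin.val hij
    simp only [] at this
    apply Fin.ext
    omega
  have h2 : (Finset.univ.filter (fun x : Fin (c + d) => c ≤ x.val)).card = d := by
    rw [hfim, Finset.card_image_of_injective _ hinj2, Finset.card_univ, Fintype.card_fin]
  have hsd : s - 1 ≤ d := by
    rw [h1, h2] at hcard
    exact hcard
  -- the counting identity
  have hsetf : ∀ t : ℕ, {ℓ : ℕ | 1 ≤ ℓ ∧ ℓ ≤ s - 1 ∧ (γ ℓ, γ (ℓ + 1)) ∈ Jz0 π c ∧
      nu π c (γ ℓ, γ (ℓ + 1)) = t} =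
      ↑((Finset.Icc 1 (s - 2)).filter (fun ℓ => nu π c (γ ℓ, γ (ℓ + 1)) = t)) := by
    intro t
    ext ℓ
    simp only [Set.mem_setOf_eq, Finset.coe_filter, Set.mem_setOf_eq, Finset.mem_Icc]
    constructor
    · rintro ⟨h1, h2, h3, h4⟩
      refine ⟨⟨h1, ?_⟩, h4⟩
      by_contra hc2
      have hℓ : ℓ = s - 1 := by omega
      have hz := (Jz0_props_s11 h3).1
      rw [mem_Jz_iff] at hz
      rw [hℓ] at hz
      have he : s - 1 + 1 = s := by omega
      rw [he] at hz
      rw [mem_Jp_iff] at hlastJp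
      simp only [] at hz hlastJp
      omega
    · rintro ⟨⟨h1, h2⟩, h4⟩
      exact ⟨h1, by omega, hZ0 ℓ h1 h2, h4⟩
  have hcnt : ∀ t : ℕ, (if 1 ≤ t then nCount π c s γ t else 0) =
      ((Finset.Icc 1 (s - 2)).filter (fun ℓ => nu π c (γ ℓ, γ (ℓ + 1)) = t)).card := by
    intro t
    by_cases ht : 1 ≤ t
    · rw [if_pos ht]
      unfold nCount
      rw [hsetf t, Set.ncard_coe_finset]
    · rw [if_neg ht]
      have ht0 : t = 0 := by omega
      symm
      rw [Finset.card_eq_zero, Finset.filter_eq_empty_iff]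
      intro ℓ hℓ
      rw [Finset.mem_Icc] at hℓ
      obtain ⟨_, ν, hν⟩ := Jz0_props_s11 (hZ0 ℓ hℓ.1 hℓ.2)
      have hpos : 0 < nu π c (γ ℓ, γ (ℓ + 1)) := nu_pos_of_ZC hν
      subst ht0
      omega
  have hsum : (∑ᶠ t : ℕ, if 1 ≤ t then nCount π c s γ t else 0) = s - 2 := by
    rw [finsum_congr hcnt]
    have hsupp : (Function.support fun t =>
        ((Finset.Icc 1 (s - 2)).filter (fun ℓ => nu π c (γ ℓ, γ (ℓ + 1)) = t)).card) ⊆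
        ↑((Finset.Icc 1 (s - 2)).image (fun ℓ => nu π c (γ ℓ, γ (ℓ + 1)))) := by
      intro t ht
      rw [Function.mem_support] at ht
      obtain ⟨ℓ, hℓ⟩ := Finset.card_pos.mp (Nat.pos_of_ne_zero ht)
      rw [Finset.mem_filter] at hℓ
      rw [Finset.mem_coe]
      exact Finset.mem_image.mpr ⟨ℓ, hℓ.1, hℓ.2⟩
    rw [finsum_eq_finset_sum_of_support_subset _ hsupp]
    rw [← Finset.card_eq_sum_card_fiberwise
      (fun x hx => Finset.mem_image_of_mem (fun ℓ => nu π c (γ ℓ, γ (ℓ + 1))) hx)]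
    rw [Nat.card_Icc]; omega
  exact ⟨by omega, hsum, by omega⟩


end PaperPurity
end
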